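/- arXiv:1706.09379 — 2 statements merged into one kernel-verified Lean document; each statement's English description precedes it below -/
import Mathlib

section
/- Suppose s : ℕ → ℝ≥0 satisfies s(0) < a/27 and s(m+1) ≤ (1/(1 - 7·s(m)/a)) · (2/9) · s(m) for all m, where a > 0, assuming additionally 7·s(m)/a < 1 whenever the recursion is applied. Then s(1) < a/90, and for all m ≥ 1, s(m+1)² · 9^{m+1} ≤ (81/100) · s(m)² · 9^m, i.e., the quantity s(m)²·9^m decays at least geometrically with ratio 81/100 for m ≥ 1. -/
lemma step_bound (a u t : ℝ) (ha : 0 < a) (hu : 0 ≤ u) (h : u < a / 27)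
    (ht : t ≤ (1 / (1 - 7 * u / a)) * (2 / 9) * u) : t ≤ (3 / 10) * u := by
  have h1 : 7 * u / a < 7 / 27 := by
    rw [div_lt_div_iff₀ ha (by norm_num)]; nlinarith
  have h2 : (0:ℝ) < 1 - 7 * u / a := by linarith
  have h3 : 1 / (1 - 7 * u / a) ≤ 27 / 20 := by
    rw [div_le_div_iff₀ h2 (by norm_num)]; linarith
  have h4 : (1 / (1 - 7 * u / a)) * (2 / 9) * u ≤ (27 / 20) * (2 / 9) * u := by
    nlinarith
  nlinarith

/-- Recursive inequality (101): if `s 0 < a/27` and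
`s (m+1) ≤ (1/(1 - 7 s m / a)) (2/9) s m` (with `7 s m / a < 1` throughout),
then `s 1 < a/90` and for `m ≥ 1` the quantity `s m ² · 9^m` decays with ratio `81/100`. -/
theorem entropy_density_decay (a : ℝ) (ha : 0 < a) (s : ℕ → ℝ) (hs : ∀ m, 0 ≤ s m)
    (h0 : s 0 < a / 27) (hlt : ∀ m, 7 * s m / a < 1)
    (hrec : ∀ m, s (m + 1) ≤ (1 / (1 - 7 * s m / a)) * (2 / 9) * s m) :
    s 1 < a / 90 ∧
    ∀ m ≥ 1, (s (m + 1)) ^ 2 * 9 ^ (m + 1) ≤ (81 / 100) * ((s m) ^ 2 * 9 ^ m) := by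
  have hsmall : ∀ m, s m < a / 27 := by
    intro m
    induction m with
    | zero => exact h0
    | succ n ih =>
      have := step_bound a (s n) (s (n+1)) ha (hs n) ih (hrec n)
      nlinarith [hs n]
  have hstep : ∀ m, s (m + 1) ≤ (3 / 10) * s m :=
    fun m => step_bound a (s m) (s (m+1)) ha (hs m) (hsmall m) (hrec m)
  constructor
  · have := hstep 0
    nlinarith
  · intro m _
    have h1 := hstep m
    have h2 : (s (m+1))^2 ≤ (9/100) * (s m)^2 := by nlinarith [hs m, hs (m+1)]
    have hp : (0:ℝ) < 9 ^ m := by positivity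
    have : (s (m+1))^2 * 9^(m+1) ≤ (9/100) * (s m)^2 * 9^(m+1) := by
      have hp' : (0:ℝ) ≤ 9 ^ (m+1) := by positivity
      nlinarith
    calc (s (m+1))^2 * 9^(m+1) ≤ (9/100) * (s m)^2 * 9^(m+1) := this
      _ = (81/100) * ((s m)^2 * 9^m) := by rw [pow_succ]; ring
end

section
/- Let x ≥ 3 be an integer, ξ ≥ 1, α ∈ (0,1), and define γ(s) = (1/(1 - ((x-2)ξ/α)·s))·(2/x) for s ∈ [0, α/((x-2)ξ)). If s₀ ∈ ℝ≥0 satisfies ((x-2)ξ/α)·s₀ < 1 - 2/x, then γ(s₀) < 1, and any sequence sₙ with s_{n+1} ≤ γ(sₙ)·sₙ is monotonically decreasing and satisfies sₙ ≤ γ(s₀)ⁿ·s₀; moreover γ(sₙ) → 2/x as n → ∞. -/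
/-- Inequalities (21)-(22): for integer `x ≥ 3`, `ξ ≥ 1`, `α ∈ (0,1)` and the contraction
map `γ s = (1/(1 - ((x-2)ξ/α) s)) (2/x)`, if `((x-2)ξ/α) s₀ < 1 - 2/x` then `γ s₀ < 1`,
any sequence with `s (n+1) ≤ γ (s n) · s n` is monotonically decreasing, satisfies
`s n ≤ γ(s₀)ⁿ s₀`, and `γ (s n) → 2/x`. -/
theorem contraction_map_properties (x : ℕ) (hx : 3 ≤ x) (ξ α : ℝ) (hξ : 1 ≤ ξ)
    (hα0 : 0 < α) (hα1 : α < 1)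
    (γ : ℝ → ℝ) (hγ : γ = fun s => (1 / (1 - (((x : ℝ) - 2) * ξ / α) * s)) * (2 / (x : ℝ)))
    (s : ℕ → ℝ) (hs : ∀ n, 0 ≤ s n)
    (h0 : (((x : ℝ) - 2) * ξ / α) * s 0 < 1 - 2 / (x : ℝ))
    (hrec : ∀ n, s (n + 1) ≤ γ (s n) * s n) :
    γ (s 0) < 1 ∧ (∀ n, s (n + 1) ≤ s n) ∧ (∀ n, s n ≤ (γ (s 0)) ^ n * s 0) ∧
    Filter.Tendsto (fun n => γ (s n)) Filter.atTop (nhds (2 / (x : ℝ))) := by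
  have hx3 : (3 : ℝ) ≤ (x : ℝ) := by exact_mod_cast hx
  have hxpos : (0 : ℝ) < (x : ℝ) := by linarith
  set c : ℝ := ((x : ℝ) - 2) * ξ / α with hcdef
  have hc : 0 ≤ c := by
    apply div_nonneg _ hα0.le
    nlinarith
  have h2x : (0 : ℝ) < 2 / (x : ℝ) := by positivity
  have h2x1 : 2 / (x : ℝ) < 1 := by
    rw [div_lt_one hxpos]; linarith
  have hγval : ∀ t, γ t = (2 / (x : ℝ)) / (1 - c * t) := by
    intro t; rw [hγ]; simp only []; ring
  -- basic facts for t in the good region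
  have hden : ∀ t : ℝ, 0 ≤ t → c * t < 1 - 2 / (x : ℝ) → 2 / (x : ℝ) < 1 - c * t := by
    intro t ht h; linarith
  have hγlt1 : ∀ t : ℝ, 0 ≤ t → c * t < 1 - 2 / (x : ℝ) → γ t < 1 := by
    intro t ht h
    rw [hγval]
    rw [div_lt_one (by linarith [hden t ht h])]
    linarith [hden t ht h]
  have hγnonneg : ∀ t : ℝ, 0 ≤ t → c * t < 1 - 2 / (x : ℝ) → 0 ≤ γ t := by
    intro t ht h
    rw [hγval]
    exact div_nonneg h2x.le (by linarith [hden t ht h])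
  -- invariant: s n ≤ s 0 and decreasing
  have key : ∀ n, s n ≤ s 0 ∧ s (n + 1) ≤ s n := by
    intro n
    induction n with
    | zero =>
      refine ⟨le_refl _, ?_⟩
      calc s 1 ≤ γ (s 0) * s 0 := hrec 0
        _ ≤ 1 * s 0 := by
          apply mul_le_mul_of_nonneg_right (le_of_lt (hγlt1 _ (hs 0) h0)) (hs 0)
        _ = s 0 := one_mul _
    | succ n ih =>
      have hle : s (n + 1) ≤ s 0 := le_trans ih.2 ih.1
      have hlt : c * s (n + 1) < 1 - 2 / (x : ℝ) := by
        calc c * s (n + 1) ≤ c * s 0 := mul_le_mul_of_nonneg_left hle hc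
          _ < 1 - 2 / (x : ℝ) := h0
      refine ⟨hle, ?_⟩
      calc s (n + 2) ≤ γ (s (n + 1)) * s (n + 1) := hrec (n + 1)
        _ ≤ 1 * s (n + 1) :=
          mul_le_mul_of_nonneg_right (le_of_lt (hγlt1 _ (hs _) hlt)) (hs _)
        _ = s (n + 1) := one_mul _
  -- monotonicity of γ on the good region
  have hγmono : ∀ t : ℝ, 0 ≤ t → t ≤ s 0 → γ t ≤ γ (s 0) := by
    intro t ht hts
    rw [hγval, hγval]
    apply div_le_div_of_nonneg_left h2x.le (by linarith [hden (s 0) (hs 0) h0])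
    have : c * t ≤ c * s 0 := mul_le_mul_of_nonneg_left hts hc
    linarith
  -- geometric bound
  have geo : ∀ n, s n ≤ (γ (s 0)) ^ n * s 0 := by
    intro n
    induction n with
    | zero => simp
    | succ n ih =>
      have hle : s n ≤ s 0 := (key n).1
      have hlt : c * s n < 1 - 2 / (x : ℝ) := by
        calc c * s n ≤ c * s 0 := mul_le_mul_of_nonneg_left hle hc
          _ < _ := h0
      have hγ0 : 0 ≤ γ (s 0) := hγnonneg _ (hs 0) h0
      calc s (n + 1) ≤ γ (s n) * s n := hrec n
        _ ≤ γ (s 0) * s n := mul_le_mul_of_nonneg_right (hγmono _ (hs n) hle) (hs n)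
        _ ≤ γ (s 0) * ((γ (s 0)) ^ n * s 0) := mul_le_mul_of_nonneg_left ih hγ0
        _ = (γ (s 0)) ^ (n + 1) * s 0 := by ring
  refine ⟨hγlt1 _ (hs 0) h0, fun n => (key n).2, geo, ?_⟩
  -- s n → 0
  have hγ0 : 0 ≤ γ (s 0) := hγnonneg _ (hs 0) h0
  have hγ1 : γ (s 0) < 1 := hγlt1 _ (hs 0) h0
  have hs0 : Filter.Tendsto s Filter.atTop (nhds 0) := by
    apply squeeze_zero hs geo
    have := (tendsto_pow_atTop_nhds_zero_of_lt_one hγ0 hγ1).mul_const (s 0)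
    simpa using this
  have hcont : ContinuousAt γ 0 := by
    rw [hγ]
    apply ContinuousAt.mul _ continuousAt_const
    apply ContinuousAt.div continuousAt_const
    · fun_prop
    · simp
  have := hcont.tendsto.comp hs0
  have hval : γ 0 = 2 / (x : ℝ) := by rw [hγval]; simp
  rw [hval] at this
  exact this
end
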